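/- Let (X_n) be a positive Harris recurrent Markov chain on Σ with stationary probability density π₀ (so π₀ K = π₀). Then for any two disjoint measurable sets A₁, A₂ ⊂ Σ, one has ∫_{A₁} π₀(x) P_x[τ⁺_{A₂} < τ⁺_{A₁}] dx = ∫_{A₂} π₀(x) P_x[τ⁺_{A₁} < τ⁺_{A₂}] dx, where τ⁺_B = inf{n ≥ 1 : X_n ∈ B} denotes the first return time to B. In other words, the committor functions with respect to the stationary measure satisfy a detailed-balance-type identity even when the chain is not reversible. -/

import Mathlib

open MeasureTheory ProbabilityTheory

/-- First return time to a set `A` (junk value `0` if `A` is never visited at a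
positive time). -/
noncomputable def retTime {S : Type*} (A : Set S) (ω : ℕ → S) : ℕ :=
  sInf {n | 1 ≤ n ∧ ω n ∈ A}

section Aux

variable {S : Type*} [MeasurableSpace S]

/-- Hitting time from time `0` (junk value `0` if never hit). -/
noncomputable def hitTime (A : Set S) (ω : ℕ → S) : ℕ :=
  sInf {n | ω n ∈ A}

lemma sInf_eq_of_mem_of_min {T : Set ℕ} {k : ℕ} (hk : k ∈ T) (hmin : ∀ m < k, m ∉ T) :
    sInf T = k := by
  refine le_antisymm (Nat.sInf_le hk) ?_
  by_contra h
  push_neg at h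
  exact hmin _ h (Nat.sInf_mem ⟨k, hk⟩)

lemma measurableSet_lt_nat {α : Type*} [MeasurableSpace α] {f g : α → ℕ}
    (hf : Measurable f) (hg : Measurable g) : MeasurableSet {a | f a < g a} := by
  have : {a | f a < g a} = ⋃ n : ℕ, (f ⁻¹' {n}) ∩ (g ⁻¹' {m | n < m}) := by
    ext a
    simp only [Set.mem_setOf_eq, Set.mem_iUnion, Set.mem_inter_iff, Set.mem_preimage,
      Set.mem_singleton_iff]
    exact ⟨fun h => ⟨f a, rfl, h⟩, fun ⟨n, hn, h⟩ => hn ▸ h⟩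
  rw [this]
  exact MeasurableSet.iUnion fun n =>
    (hf (measurableSet_singleton n)).inter (hg (Set.to_countable _).measurableSet)

lemma measurable_firstTime (N : Set ℕ) {A : Set S} (hA : MeasurableSet A) :
    Measurable fun ω : ℕ → S => sInf {n | n ∈ N ∧ ω n ∈ A} := by
  have hm : ∀ m : ℕ, MeasurableSet {ω : ℕ → S | m ∈ N ∧ ω m ∈ A} := by
    intro m
    by_cases h : m ∈ N
    · simp only [h, true_and]
      exact measurable_pi_apply m hA
    · simp only [h, false_and, Set.setOf_false]
      exact MeasurableSet.empty
  apply measurable_to_countable'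
  intro k
  have key : ∀ ω : ℕ → S, sInf {n | n ∈ N ∧ ω n ∈ A} = k ↔
      ((k ∈ N ∧ ω k ∈ A) ∧ ∀ m < k, ¬(m ∈ N ∧ ω m ∈ A)) ∨
        (k = 0 ∧ ∀ n, ¬(n ∈ N ∧ ω n ∈ A)) := by
    intro ω
    constructor
    · intro h
      by_cases hne : {n | n ∈ N ∧ ω n ∈ A}.Nonempty
      · left
        refine ⟨h ▸ Nat.sInf_mem hne, fun m hm' => Nat.notMem_of_lt_sInf (h ▸ hm')⟩
      · right
        rw [Set.not_nonempty_iff_eq_empty] at hne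
        refine ⟨by rw [hne, Nat.sInf_empty] at h; exact h.symm, fun n hn => ?_⟩
        rw [Set.eq_empty_iff_forall_notMem] at hne
        exact hne n hn
    · rintro (⟨h1, h2⟩ | ⟨rfl, h⟩)
      · exact sInf_eq_of_mem_of_min h1 h2
      · have : {n | n ∈ N ∧ ω n ∈ A} = ∅ := Set.eq_empty_iff_forall_notMem.mpr h
        rw [this, Nat.sInf_empty]
  have : {ω : ℕ → S | sInf {n | n ∈ N ∧ ω n ∈ A} = k} =
      ({ω : ℕ → S | k ∈ N ∧ ω k ∈ A} ∩ ⋂ m ∈ Finset.range k, {ω : ℕ → S | m ∈ N ∧ ω m ∈ A}ᶜ) ∪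
        ({ω : ℕ → S | k = 0} ∩ ⋂ n : ℕ, {ω : ℕ → S | n ∈ N ∧ ω n ∈ A}ᶜ) := by
    ext ω
    simp only [Set.mem_setOf_eq, Set.mem_union, Set.mem_inter_iff, Set.mem_iInter,
      Set.mem_compl_iff, Finset.mem_range, key ω]
  show MeasurableSet {ω : ℕ → S | sInf {n | n ∈ N ∧ ω n ∈ A} = k}
  rw [this]
  refine MeasurableSet.union ?_ ?_
  · exact (hm k).inter (MeasurableSet.biInter (Set.to_countable _) fun m _ => (hm m).compl)
  · refine MeasurableSet.inter ?_ (MeasurableSet.iInter fun n => (hm n).compl)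
    by_cases h : k = 0 <;> simp [h]

lemma measurable_retTime {A : Set S} (hA : MeasurableSet A) :
    Measurable (retTime A : (ℕ → S) → ℕ) :=
  measurable_firstTime {n : ℕ | 1 ≤ n} hA

lemma measurable_hitTime {A : Set S} (hA : MeasurableSet A) :
    Measurable (hitTime A : (ℕ → S) → ℕ) := by
  have := measurable_firstTime Set.univ hA
  convert this using 2 with ω
  unfold hitTime
  congr 1
  ext n
  simp

lemma retTime_eq_hitTime_shift {A : Set S} {ω : ℕ → S} (h : ∃ n, 1 ≤ n ∧ ω n ∈ A) :
    retTime A ω = hitTime A (fun n => ω (n + 1)) + 1 := by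
  have hTne : {n | 1 ≤ n ∧ ω n ∈ A}.Nonempty := h
  have hmem := Nat.sInf_mem hTne
  set k := sInf {n | 1 ≤ n ∧ ω n ∈ A} with hk
  have hk1 : 1 ≤ k := hmem.1
  have hhit : hitTime A (fun n => ω (n + 1)) = k - 1 := by
    apply sInf_eq_of_mem_of_min
    · show ω (k - 1 + 1) ∈ A
      rw [Nat.sub_add_cancel hk1]
      exact hmem.2
    · intro m hm hmmem
      have h1 : m + 1 ∈ {n | 1 ≤ n ∧ ω n ∈ A} := ⟨Nat.succ_le_succ (Nat.zero_le m), hmmem⟩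
      have := Nat.sInf_le h1
      omega
  show k = hitTime A (fun n => ω (n + 1)) + 1
  rw [hhit]
  omega

lemma hitTime_eq_retTime {A : Set S} {ω : ℕ → S} (h0 : ω 0 ∉ A) :
    hitTime A ω = retTime A ω := by
  unfold hitTime retTime
  congr 1
  ext n
  simp only [Set.mem_setOf_eq]
  constructor
  · intro hn
    refine ⟨?_, hn⟩
    rcases Nat.eq_zero_or_pos n with rfl | hpos
    · exact absurd hn h0
    · exact hpos
  · exact And.right

lemma hitTime_eq_zero {A : Set S} {ω : ℕ → S} (h : ω 0 ∈ A) : hitTime A ω = 0 :=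
  Nat.sInf_eq_zero.mpr (Or.inl h)

lemma measure_eq_of_eqOn {α : Type*} [MeasurableSpace α] (μ : Measure α) {s t u : Set α}
    (h : ∀ x ∈ u, x ∈ s ↔ x ∈ t) (hu : μ uᶜ = 0) : μ s = μ t := by
  apply measure_congr
  rw [MeasureTheory.ae_eq_set]
  constructor
  · refine measure_mono_null (fun x hx => ?_) hu
    intro hxu
    exact hx.2 ((h x hxu).mp hx.1)
  · refine measure_mono_null (fun x hx => ?_) hu
    intro hxu
    exact hx.2 ((h x hxu).mpr hx.1)

lemma integral_mul_eq_toReal_lintegral {ν : Measure S} {π₀ : S → ℝ}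
    (hπ₀nn : ∀ x, 0 ≤ π₀ x) (hπ₀m : AEMeasurable π₀ ν) {f : S → ℝ}
    (hf : Measurable f) (hf0 : ∀ x, 0 ≤ f x) :
    ∫ x, π₀ x * f x ∂ν
      = (∫⁻ x, ENNReal.ofReal (f x) ∂(ν.withDensity fun x => ENNReal.ofReal (π₀ x))).toReal := by
  have hπor : AEMeasurable (fun x => ENNReal.ofReal (π₀ x)) ν :=
    ENNReal.measurable_ofReal.comp_aemeasurable hπ₀m
  have hfor : AEMeasurable (fun x => ENNReal.ofReal (f x)) ν :=
    (ENNReal.measurable_ofReal.comp hf).aemeasurable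
  rw [lintegral_withDensity_eq_lintegral_mul₀ hπor hfor]
  rw [integral_eq_lintegral_of_nonneg_ae
    (Filter.Eventually.of_forall fun x => mul_nonneg (hπ₀nn x) (hf0 x))
    ((hπ₀m.mul hf.aemeasurable).aestronglyMeasurable)]
  congr 1
  refine lintegral_congr fun x => ?_
  simp only [Pi.mul_apply, Function.comp_apply]
  rw [ENNReal.ofReal_mul (hπ₀nn x)]

end Aux

/-- Detailed-balance-type identity for committor functions of a positive Harris recurrent
(not necessarily reversible) Markov chain with stationary density `π₀`:
`∫_{A₁} π₀(x) P_x[τ⁺_{A₂} < τ⁺_{A₁}] dx = ∫_{A₂} π₀(x) P_x[τ⁺_{A₁} < τ⁺_{A₂}] dx`. -/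
theorem committor_detailed_balance
    {S : Type*} [MeasurableSpace S] [MeasurableSingletonClass S]
    (P : Kernel S (ℕ → S)) [IsMarkovKernel P]
    (ν : Measure S)
    (hStart : ∀ x : S, P x {ω | ω 0 = x} = 1)
    (hMarkov : ∀ (x : S) (F : (ℕ → S) → ℝ), Measurable F → (∃ C, ∀ ω, |F ω| ≤ C) →
      ∫ ω, F (fun n => ω (n + 1)) ∂(P x) = ∫ ω, (∫ ω', F ω' ∂(P (ω 1))) ∂(P x))
    (π₀ : S → ℝ) (hπ₀pos : ∀ x, 0 < π₀ x) (hπ₀int : Integrable π₀ ν)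
    -- stationarity: `π₀ K = π₀`
    (hstat : ∀ B : Set S, MeasurableSet B →
      ∫ x, π₀ x * (P x {ω | ω 1 ∈ B}).toReal ∂ν = ∫ x in B, π₀ x ∂ν)
    (A₁ A₂ : Set S) (h₁ : MeasurableSet A₁) (h₂ : MeasurableSet A₂)
    (hdisj : Disjoint A₁ A₂)
    -- Harris recurrence: both sets are almost surely visited at positive times
    (hRec₁ : ∀ x : S, P x {ω | ∃ n, 1 ≤ n ∧ ω n ∈ A₁} = 1)
    (hRec₂ : ∀ x : S, P x {ω | ∃ n, 1 ≤ n ∧ ω n ∈ A₂} = 1) :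
    ∫ x in A₁, π₀ x * (P x {ω | retTime A₂ ω < retTime A₁ ω}).toReal ∂ν
      = ∫ x in A₂, π₀ x * (P x {ω | retTime A₁ ω < retTime A₂ ω}).toReal ∂ν := by
  classical
  have hπ₀nn : ∀ x, 0 ≤ π₀ x := fun x => (hπ₀pos x).le
  have hπ₀m : AEMeasurable π₀ ν := hπ₀int.aemeasurable
  have hev1 : Measurable fun ω : ℕ → S => ω 1 := measurable_pi_apply 1
  have hret₁ : Measurable (retTime A₁ : (ℕ → S) → ℕ) := measurable_retTime h₁
  have hret₂ : Measurable (retTime A₂ : (ℕ → S) → ℕ) := measurable_retTime h₂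
  have hhit₁ : Measurable (hitTime A₁ : (ℕ → S) → ℕ) := measurable_hitTime h₁
  have hhit₂ : Measurable (hitTime A₂ : (ℕ → S) → ℕ) := measurable_hitTime h₂
  have hE : MeasurableSet {ω : ℕ → S | retTime A₂ ω < retTime A₁ ω} :=
    measurableSet_lt_nat hret₂ hret₁
  have hE' : MeasurableSet {ω : ℕ → S | retTime A₁ ω < retTime A₂ ω} :=
    measurableSet_lt_nat hret₁ hret₂
  have hE₀ : MeasurableSet {ω : ℕ → S | hitTime A₂ ω < hitTime A₁ ω} :=
    measurableSet_lt_nat hhit₂ hhit₁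
  have hRmeas₁ : MeasurableSet {ω : ℕ → S | ∃ n, 1 ≤ n ∧ ω n ∈ A₁} := by
    have : {ω : ℕ → S | ∃ n, 1 ≤ n ∧ ω n ∈ A₁}
        = ⋃ n, ⋃ _h : 1 ≤ n, (fun ω : ℕ → S => ω n) ⁻¹' A₁ := by
      ext ω; simp [Set.mem_iUnion]
    rw [this]
    exact MeasurableSet.iUnion fun n => MeasurableSet.iUnion fun _ => measurable_pi_apply n h₁
  have hRmeas₂ : MeasurableSet {ω : ℕ → S | ∃ n, 1 ≤ n ∧ ω n ∈ A₂} := by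
    have : {ω : ℕ → S | ∃ n, 1 ≤ n ∧ ω n ∈ A₂}
        = ⋃ n, ⋃ _h : 1 ≤ n, (fun ω : ℕ → S => ω n) ⁻¹' A₂ := by
      ext ω; simp [Set.mem_iUnion]
    rw [this]
    exact MeasurableSet.iUnion fun n => MeasurableSet.iUnion fun _ => measurable_pi_apply n h₂
  have hStartMeas : ∀ y : S, MeasurableSet {ω : ℕ → S | ω 0 = y} := by
    intro y
    have : {ω : ℕ → S | ω 0 = y} = (fun ω : ℕ → S => ω 0) ⁻¹' {y} := by
      ext ω; simp
    rw [this]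
    exact measurable_pi_apply 0 (measurableSet_singleton y)
  -- complement of a full-measure set is null
  have hcompl : ∀ (s : Set (ℕ → S)), MeasurableSet s → ∀ x, P x s = 1 → P x sᶜ = 0 := by
    intro s hs x h
    have := measure_compl hs (measure_ne_top (P x) s)
    rw [h, measure_univ, tsub_self] at this
    exact this
  set Ω₀ : Set (ℕ → S) :=
    {ω | ∃ n, 1 ≤ n ∧ ω n ∈ A₁} ∩ {ω | ∃ n, 1 ≤ n ∧ ω n ∈ A₂} with hΩ₀def
  have hΩ₀0 : ∀ x, P x Ω₀ᶜ = 0 := by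
    intro x
    rw [hΩ₀def, Set.compl_inter]
    exact measure_union_null (hcompl _ hRmeas₁ x (hRec₁ x)) (hcompl _ hRmeas₂ x (hRec₂ x))
  have hΩ₀1 : ∀ x, P x Ω₀ = 1 := by
    intro x
    have := measure_compl (hRmeas₁.inter hRmeas₂) (measure_ne_top (P x) _)
    rw [hΩ₀0 x] at this
    have h2 : P x Ω₀ ≤ 1 := prob_le_one
    rw [measure_univ] at this
    have : (1 : ENNReal) - P x Ω₀ = 0 := this.symm
    exact le_antisymm h2 (by simpa using tsub_eq_zero_iff_le.mp this)
  set G : S → ℝ := fun x => (P x {ω | retTime A₂ ω < retTime A₁ ω}).toReal with hGdef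
  set G' : S → ℝ := fun x => (P x {ω | retTime A₁ ω < retTime A₂ ω}).toReal with hG'def
  have hGm : Measurable G := (P.measurable_coe hE).ennreal_toReal
  have hG'm : Measurable G' := (P.measurable_coe hE').ennreal_toReal
  have hprobReal : ∀ (x : S) (E : Set (ℕ → S)), (P x E).toReal ≤ 1 := by
    intro x E
    have h := prob_le_one (μ := P x) (s := E)
    simpa using ENNReal.toReal_mono ENNReal.one_ne_top h
  have hG0 : ∀ x, 0 ≤ G x := fun x => ENNReal.toReal_nonneg
  have hG1 : ∀ x, G x ≤ 1 := fun x => hprobReal x _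
  have hG'0 : ∀ x, 0 ≤ G' x := fun x => ENNReal.toReal_nonneg
  have hG'1 : ∀ x, G' x ≤ 1 := fun x => hprobReal x _
  set g : S → ℝ := fun x => if x ∈ A₂ then 1 else if x ∈ A₁ then 0 else G x with hgdef
  have hgm : Measurable g := Measurable.ite h₂ measurable_const
    (Measurable.ite h₁ measurable_const hGm)
  have hg0 : ∀ x, 0 ≤ g x := by
    intro x
    simp only [hgdef]
    split_ifs <;> simp [hG0 x]
  have hg1 : ∀ x, g x ≤ 1 := by
    intro x
    simp only [hgdef]
    split_ifs <;> simp [hG1 x]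
  -- Step 1: G + G' = 1
  have hsum : ∀ x, G x + G' x = 1 := by
    intro x
    have hdisjE : Disjoint {ω : ℕ → S | retTime A₂ ω < retTime A₁ ω}
        {ω : ℕ → S | retTime A₁ ω < retTime A₂ ω} := by
      rw [Set.disjoint_left]
      intro ω hω1 hω2
      simp only [Set.mem_setOf_eq] at hω1 hω2
      omega
    have hunion : P x ({ω : ℕ → S | retTime A₂ ω < retTime A₁ ω}
        ∪ {ω | retTime A₁ ω < retTime A₂ ω}) = 1 := by
      refine le_antisymm prob_le_one ?_
      rw [← hΩ₀1 x]
      refine measure_mono fun ω hω => ?_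
      obtain ⟨hω1, hω2⟩ := hω
      have hne1 : ({n | 1 ≤ n ∧ ω n ∈ A₁} : Set ℕ).Nonempty := hω1
      have hne2 : ({n | 1 ≤ n ∧ ω n ∈ A₂} : Set ℕ).Nonempty := hω2
      have hm1 := Nat.sInf_mem hne1
      have hm2 := Nat.sInf_mem hne2
      have hne : retTime A₁ ω ≠ retTime A₂ ω := by
        intro h
        have : ω (retTime A₁ ω) ∈ A₁ := hm1.2
        have h2 : ω (retTime A₁ ω) ∈ A₂ := h ▸ hm2.2
        exact Set.disjoint_left.mp hdisj this h2
      rcases lt_or_gt_of_ne hne with h | h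
      · exact Or.inr h
      · exact Or.inl h
    have hadd : P x {ω : ℕ → S | retTime A₂ ω < retTime A₁ ω}
        + P x {ω | retTime A₁ ω < retTime A₂ ω} = 1 := by
      rw [← measure_union hdisjE hE']
      exact hunion
    have := congrArg ENNReal.toReal hadd
    rw [ENNReal.toReal_add (measure_ne_top _ _) (measure_ne_top _ _), ENNReal.toReal_one] at this
    exact this
  -- Step 2: Markov property, G x = ∫ g(ω 1) dP x
  have hstep2 : ∀ x, G x = ∫ ω, g (ω 1) ∂(P x) := by
    intro x
    set E₀ : Set (ℕ → S) := {ω | hitTime A₂ ω < hitTime A₁ ω} with hE₀def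
    set F : (ℕ → S) → ℝ := E₀.indicator 1 with hFdef
    have hFm : Measurable F := (measurable_const (a := (1:ℝ))).indicator hE₀
    have hFb : ∃ C, ∀ ω, |F ω| ≤ C := by
      refine ⟨1, fun ω => ?_⟩
      simp only [hFdef, Set.indicator_apply]
      split_ifs <;> simp
    have hM := hMarkov x F hFm hFb
    have hinner : ∀ y, ∫ ω', F ω' ∂(P y) = g y := by
      intro y
      rw [hFdef, integral_indicator_one hE₀]
      by_cases hy2 : y ∈ A₂
      · simp only [hgdef, hy2, if_pos]
        have hPE : P y E₀ = 1 := by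
          refine le_antisymm prob_le_one ?_
          have hsub : ({ω : ℕ → S | ω 0 = y} ∩ {ω | ∃ n, 1 ≤ n ∧ ω n ∈ A₁}) ⊆ E₀ := by
            rintro ω ⟨h0, hex⟩
            simp only [Set.mem_setOf_eq] at h0 hex ⊢
            have hz : hitTime A₂ ω = 0 := hitTime_eq_zero (by rw [h0]; exact hy2)
            have hne : ({n | ω n ∈ A₁} : Set ℕ).Nonempty := by
              obtain ⟨n, _, hn⟩ := hex
              exact ⟨n, hn⟩
            have hmem := Nat.sInf_mem hne
            have hpos : hitTime A₁ ω ≠ 0 := by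
              intro hzero
              have hωh : ω (hitTime A₁ ω) ∈ A₁ := hmem
              rw [hzero, h0] at hωh
              exact Set.disjoint_left.mp hdisj hωh hy2
            show hitTime A₂ ω < hitTime A₁ ω
            rw [hz]
            exact Nat.pos_of_ne_zero hpos
          calc (1 : ENNReal)
              = P y ({ω : ℕ → S | ω 0 = y} ∩ {ω | ∃ n, 1 ≤ n ∧ ω n ∈ A₁}) := by
                refine (le_antisymm prob_le_one ?_).symm
                have hc : P y ({ω : ℕ → S | ω 0 = y} ∩ {ω | ∃ n, 1 ≤ n ∧ ω n ∈ A₁})ᶜ = 0 := by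
                  rw [Set.compl_inter]
                  exact measure_union_null (hcompl _ (hStartMeas y) y (hStart y))
                    (hcompl _ hRmeas₁ y (hRec₁ y))
                have := measure_compl ((hStartMeas y).inter hRmeas₁) (measure_ne_top (P y) _)
                rw [hc, measure_univ] at this
                have h0 : (1 : ENNReal) - P y _ = 0 := this.symm
                simpa using tsub_eq_zero_iff_le.mp h0
            _ ≤ P y E₀ := measure_mono hsub
        rw [measureReal_def, hPE]
        simp
      · by_cases hy1 : y ∈ A₁
        · simp only [hgdef, hy2, if_neg (by simp [hy2] : ¬ y ∈ A₂), hy1, if_pos, if_true]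
          have hPE : P y E₀ = 0 := by
            refine measure_mono_null (fun ω hω => ?_) (hcompl _ (hStartMeas y) y (hStart y))
            simp only [hE₀def, Set.mem_setOf_eq] at hω
            intro h0
            simp only [Set.mem_setOf_eq] at h0
            have hz : hitTime A₁ ω = 0 := hitTime_eq_zero (by rw [h0]; exact hy1)
            omega
          rw [measureReal_def, hPE]
          simp
        · simp only [hgdef, if_neg hy2, if_neg hy1]
          rw [hGdef, measureReal_def]
          congr 1
          refine measure_eq_of_eqOn (P y) (u := {ω : ℕ → S | ω 0 = y}) ?_
            (hcompl _ (hStartMeas y) y (hStart y))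
          intro ω h0
          simp only [Set.mem_setOf_eq] at h0
          simp only [hE₀def, Set.mem_setOf_eq]
          rw [hitTime_eq_retTime (A := A₂) (by rw [h0]; exact hy2),
            hitTime_eq_retTime (A := A₁) (by rw [h0]; exact hy1)]
    have hL : ∫ ω, F (fun n => ω (n + 1)) ∂(P x) = G x := by
      have hpre : (fun ω : ℕ → S => F (fun n => ω (n + 1)))
          = ((fun ω : ℕ → S => (fun n => ω (n + 1))) ⁻¹' E₀).indicator 1 := by
        funext ω
        by_cases h : (fun n => ω (n + 1)) ∈ E₀ <;>
          simp [hFdef, Set.indicator_apply, Set.mem_preimage, h]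
      have hθm : Measurable fun ω : ℕ → S => (fun n => ω (n + 1) : ℕ → S) :=
        measurable_pi_lambda _ fun n => measurable_pi_apply _
      rw [hpre, integral_indicator_one (hθm hE₀)]
      rw [hGdef, measureReal_def]
      congr 1
      refine measure_eq_of_eqOn (P x) (u := Ω₀) ?_ (hΩ₀0 x)
      intro ω hω
      obtain ⟨hω1, hω2⟩ := hω
      simp only [Set.mem_preimage, hE₀def, Set.mem_setOf_eq]
      rw [show (retTime A₂ ω = hitTime A₂ (fun n => ω (n + 1)) + 1) from
          retTime_eq_hitTime_shift hω2,
        show (retTime A₁ ω = hitTime A₁ (fun n => ω (n + 1)) + 1) from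
          retTime_eq_hitTime_shift hω1] at *
      omega
    calc G x = ∫ ω, F (fun n => ω (n + 1)) ∂(P x) := hL.symm
      _ = ∫ ω, (∫ ω', F ω' ∂(P (ω 1))) ∂(P x) := hM
      _ = ∫ ω, g (ω 1) ∂(P x) := by
          refine integral_congr_ae (Filter.Eventually.of_forall fun ω => ?_)
          exact hinner (ω 1)
  -- Step 3: stationarity extended to g
  set μ : Measure S := ν.withDensity fun x => ENNReal.ofReal (π₀ x) with hμdef
  have hμfin : IsFiniteMeasure μ := by
    constructor
    rw [hμdef, withDensity_apply _ MeasurableSet.univ, Measure.restrict_univ]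
    have : ∀ x, ENNReal.ofReal (π₀ x) = ‖π₀ x‖ₑ := by
      intro x
      rw [← ofReal_norm, Real.norm_of_nonneg (hπ₀nn x)]
    rw [lintegral_congr this]
    exact hπ₀int.2
  set κ : S → Measure S := fun x => (P x).map fun ω => ω 1 with hκdef
  have hκm : Measurable κ := (Measure.measurable_map _ hev1).comp P.measurable
  have hκapp : ∀ x (B : Set S), MeasurableSet B → κ x B = P x {ω | ω 1 ∈ B} := by
    intro x B hB
    rw [hκdef, Measure.map_apply hev1 hB]
    rfl
  have hκle1 : ∀ x (B : Set S), κ x B ≤ 1 := by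
    intro x B
    haveI : IsProbabilityMeasure ((P x).map fun ω : ℕ → S => ω 1) :=
      Measure.isProbabilityMeasure_map hev1.aemeasurable
    exact prob_le_one
  have hbind : μ.bind κ = μ := by
    ext B hB
    rw [Measure.bind_apply hB hκm.aemeasurable]
    have hfmeas : Measurable fun x => (κ x B).toReal :=
      ((Measure.measurable_coe hB).comp hκm).ennreal_toReal
    have hf0 : ∀ x, 0 ≤ (κ x B).toReal := fun x => ENNReal.toReal_nonneg
    have hconv := integral_mul_eq_toReal_lintegral (ν := ν) hπ₀nn hπ₀m hfmeas hf0
    have hofReal : ∀ x, ENNReal.ofReal ((κ x B).toReal) = κ x B := by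
      intro x
      exact ENNReal.ofReal_toReal (ne_top_of_le_ne_top ENNReal.one_ne_top (hκle1 x B))
    have hconv2 : ∫ x, π₀ x * (κ x B).toReal ∂ν = (∫⁻ x, κ x B ∂μ).toReal := by
      rw [hconv]
      congr 1
      exact lintegral_congr hofReal
    have hLHS : ∫ x, π₀ x * (κ x B).toReal ∂ν = ∫ x, π₀ x * (P x {ω | ω 1 ∈ B}).toReal ∂ν := by
      refine integral_congr_ae (Filter.Eventually.of_forall fun x => ?_)
      show π₀ x * (κ x B).toReal = π₀ x * (P x {ω | ω 1 ∈ B}).toReal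
      rw [hκapp x B hB]
    have hRHS : ∫ x in B, π₀ x ∂ν = (μ B).toReal := by
      rw [hμdef, withDensity_apply _ hB]
      rw [integral_eq_lintegral_of_nonneg_ae (Filter.Eventually.of_forall hπ₀nn)
        hπ₀int.aestronglyMeasurable.restrict]
    have heq : (∫⁻ x, κ x B ∂μ).toReal = (μ B).toReal := by
      rw [← hconv2, hLHS, hstat B hB, hRHS]
    have hfin1 : ∫⁻ x, κ x B ∂μ ≠ ⊤ := by
      refine ne_top_of_le_ne_top ?_ (lintegral_mono fun x => hκle1 x B)
      rw [lintegral_one]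
      exact measure_ne_top μ _
    exact (ENNReal.toReal_eq_toReal_iff' hfin1 (measure_ne_top μ B)).mp heq
  set g' : S → ENNReal := fun y => ENNReal.ofReal (g y) with hg'def
  have hg'm : Measurable g' := ENNReal.measurable_ofReal.comp hgm
  set N : S → ENNReal := fun x => ∫⁻ ω, g' (ω 1) ∂(P x) with hNdef
  have hNm : Measurable N :=
    (Measure.measurable_lintegral (hg'm.comp hev1)).comp P.measurable
  have hNle1 : ∀ x, N x ≤ 1 := by
    intro x
    rw [hNdef]
    calc ∫⁻ ω, g' (ω 1) ∂(P x) ≤ ∫⁻ _, 1 ∂(P x) := by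
          refine lintegral_mono fun ω => ?_
          rw [hg'def]
          exact ENNReal.ofReal_le_one.mpr (hg1 _)
      _ = 1 := by rw [lintegral_one, measure_univ]
  have hNfx : ∀ x, ∫ ω, g (ω 1) ∂(P x) = (N x).toReal := by
    intro x
    exact integral_eq_lintegral_of_nonneg_ae (μ := P x) (f := fun ω : ℕ → S => g (ω 1))
      (Filter.Eventually.of_forall fun ω => hg0 (ω 1)) (hgm.comp hev1).aestronglyMeasurable
  have hkey : ∫⁻ y, g' y ∂μ = ∫⁻ x, N x ∂μ := by
    conv_lhs => rw [← hbind]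
    rw [Measure.lintegral_bind hκm.aemeasurable hg'm.aemeasurable]
    refine lintegral_congr fun x => ?_
    exact lintegral_map hg'm hev1
  have hstep3 : ∫ x, π₀ x * G x ∂ν = ∫ x, π₀ x * g x ∂ν := by
    have e1 : ∫ x, π₀ x * G x ∂ν = ∫ x, π₀ x * (N x).toReal ∂ν := by
      refine integral_congr_ae (Filter.Eventually.of_forall fun x => ?_)
      show π₀ x * G x = π₀ x * (N x).toReal
      rw [hstep2 x, hNfx x]
    have e2 : ∫ x, π₀ x * (N x).toReal ∂ν = (∫⁻ x, N x ∂μ).toReal := by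
      rw [integral_mul_eq_toReal_lintegral hπ₀nn hπ₀m hNm.ennreal_toReal
        (fun x => ENNReal.toReal_nonneg)]
      rw [← hμdef]
      congr 1
      refine lintegral_congr fun x => ?_
      exact ENNReal.ofReal_toReal (ne_top_of_le_ne_top ENNReal.one_ne_top (hNle1 x))
    have e3 : ∫ x, π₀ x * g x ∂ν = (∫⁻ y, g' y ∂μ).toReal := by
      rw [integral_mul_eq_toReal_lintegral hπ₀nn hπ₀m hgm hg0, ← hμdef]
    rw [e1, e2, e3, hkey]
  -- Step 4: final algebra
  have hintbdd : ∀ {h : S → ℝ}, Measurable h → (∀ x, 0 ≤ h x) → (∀ x, h x ≤ 1) →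
      Integrable (fun x => π₀ x * h x) ν := by
    intro h hm h0 h1
    refine hπ₀int.mono ((hπ₀m.mul hm.aemeasurable).aestronglyMeasurable)
      (Filter.Eventually.of_forall fun x => ?_)
    rw [norm_mul, Real.norm_of_nonneg (hπ₀nn x), Real.norm_of_nonneg (h0 x)]
    nlinarith [hπ₀nn x, h0 x, h1 x]
  have hintG : Integrable (fun x => π₀ x * G x) ν := hintbdd hGm hG0 hG1
  have hintG' : Integrable (fun x => π₀ x * G' x) ν := hintbdd hG'm hG'0 hG'1
  have hintg : Integrable (fun x => π₀ x * g x) ν := hintbdd hgm hg0 hg1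
  have hint1 : Integrable (A₁.indicator fun x => π₀ x * G x) ν := hintG.indicator h₁
  have hint2 : Integrable (A₂.indicator fun x => π₀ x * G' x) ν := hintG'.indicator h₂
  rw [← integral_indicator h₁, ← integral_indicator h₂]
  rw [← sub_eq_zero, ← integral_sub hint1 hint2]
  have heq : ∀ x, A₁.indicator (fun x => π₀ x * G x) x - A₂.indicator (fun x => π₀ x * G' x) x
      = π₀ x * G x - π₀ x * g x := by
    intro x
    by_cases hx2 : x ∈ A₂
    · have hx1 : x ∉ A₁ := fun h => Set.disjoint_left.mp hdisj h hx2
      rw [Set.indicator_of_notMem hx1, Set.indicator_of_mem hx2]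
      simp only [hgdef, if_pos hx2]
      have h' : G' x = 1 - G x := by linarith [hsum x]
      rw [h']
      ring
    · by_cases hx1 : x ∈ A₁
      · rw [Set.indicator_of_mem hx1, Set.indicator_of_notMem hx2]
        simp only [hgdef, if_neg hx2, if_pos hx1]
        ring
      · rw [Set.indicator_of_notMem hx1, Set.indicator_of_notMem hx2]
        simp only [hgdef, if_neg hx2, if_neg hx1]
        ring
  calc ∫ x, (A₁.indicator (fun x => π₀ x * G x) x - A₂.indicator (fun x => π₀ x * G' x) x) ∂ν
      = ∫ x, (π₀ x * G x - π₀ x * g x) ∂ν := by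
        refine integral_congr_ae (Filter.Eventually.of_forall fun x => heq x)
    _ = (∫ x, π₀ x * G x ∂ν) - ∫ x, π₀ x * g x ∂ν := integral_sub hintG hintg
    _ = 0 := by rw [hstep3]; ring
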